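/- Let H be a graph on h vertices and let G be an H-topological-minor-free finite simple graph together with a downwards well-linked rooted superbranch decomposition T = (T, L) of the support hypergraph H(G) with root r. Then every hyperedge e ∈ E(torso(r)) with |V(e)| ≥ h has multiplicity less than h(h−1)/2 in torso(r). -/

import Mathlib

/-!
Suppose a torso hyperedge `B` of rank at least `h` had at least `h(h-1)/2` parallel copies,
i.e. root children `c` with `bd(L[c]) = B`. Embed `V(H)` into `B` and assign to every edge `uv`
of `H` its own child `c`. Since `L[c]` is well-linked, any two of its boundary vertices are joined
by a path through `int(L[c])`: otherwise the hyperedges of `L[c]` meeting the component of `u`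
and the remaining ones would both have boundary strictly smaller than `bd(L[c])`. The sets
`L[c]` of distinct children are disjoint, so these paths are internally disjoint and form a
subdivision of `H` in `G`.
-/

open scoped Classical

namespace Paper

variable {V : Type} {E : Type}

/-- Vertices covered by a set of hyperedges. -/
noncomputable def Vs (F : E → Finset V) (A : Finset E) : Finset V := A.biUnion F

/-- Boundary of `A` relative to a ground set of hyperedges. -/
noncomputable def bdIn (F : E → Finset V) (ground A : Finset E) : Finset V :=
  Vs F A ∩ Vs F (ground \ A)

/-- Boundary size. -/
noncomputable def lamIn (F : E → Finset V) (ground A : Finset E) : ℕ :=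
  (bdIn F ground A).card

/-- Interior. -/
noncomputable def intIn (F : E → Finset V) (ground A : Finset E) : Finset V :=
  Vs F A \ bdIn F ground A

/-- A set of hyperedges is well-linked. -/
def WellLinkedIn (F : E → Finset V) (ground A : Finset E) : Prop :=
  ∀ A1 A2 : Finset E, A1 ∪ A2 = A → A1 ∩ A2 = ∅ →
    lamIn F ground A ≤ lamIn F ground A1 ∨ lamIn F ground A ≤ lamIn F ground A2

/-- A nonempty set of hyperedges is internally connected. -/
def InternallyConnectedIn (F : E → Finset V) (ground A : Finset E) : Prop :=
  A.Nonempty ∧ ¬ ∃ B1 B2 : Finset E, B1 ∪ B2 = A ∧ B1 ∩ B2 = ∅ ∧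
    B1.Nonempty ∧ B2.Nonempty ∧
    bdIn F ground B1 ⊆ bdIn F ground A ∧ bdIn F ground B2 ⊆ bdIn F ground A

/-- Internal component: an inclusion-maximal internally connected subset. -/
def InternalComponentIn (F : E → Finset V) (ground B B' : Finset E) : Prop :=
  B' ⊆ B ∧ InternallyConnectedIn F ground B' ∧
    ∀ B'' : Finset E, B' ⊆ B'' → B'' ⊆ B → InternallyConnectedIn F ground B'' → B'' = B'

/-- A tree decomposition of the graph with adjacency `Adj` induced on vertex set `s`. -/
structure TreeDecompOn (Adj : V → V → Prop) (s : Finset V) where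
  ι : Type
  fin : Fintype ι
  tr : SimpleGraph ι
  isTree : tr.IsTree
  bag : ι → Finset V
  bag_sub : ∀ i, bag i ⊆ s
  cover_v : ∀ v ∈ s, ∃ i, v ∈ bag i
  cover_e : ∀ u ∈ s, ∀ v ∈ s, Adj u v → ∃ i, u ∈ bag i ∧ v ∈ bag i
  conn : ∀ v ∈ s, (tr.induce {i | v ∈ bag i}).Connected

/-- Treewidth (an integer, `-1` for the empty graph) of the graph
with adjacency `Adj` induced on the vertex set `s`. -/
noncomputable def tw (Adj : V → V → Prop) (s : Finset V) : ℤ :=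
  sInf {k : ℤ | ∃ D : TreeDecompOn Adj s, ∀ i, ((D.bag i).card : ℤ) ≤ k + 1}

/-- Minimum size of a treewidth-`η`-modulator of the graph induced on `s`. -/
noncomputable def twmodOn (Adj : V → V → Prop) (s : Finset V) (η : ℕ) : ℕ :=
  sInf {n : ℕ | ∃ X : Finset V, X ⊆ s ∧ X.card ≤ n ∧ tw Adj (s \ X) ≤ (η : ℤ)}

/-- Adjacency of the primal graph of a hypergraph. -/
def primalAdj (F : E → Finset V) : V → V → Prop :=
  fun u v => u ≠ v ∧ ∃ e : E, u ∈ F e ∧ v ∈ F e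

/-- Internal treewidth of a set of hyperedges. -/
noncomputable def itw [Fintype E] (F : E → Finset V) (A : Finset E) : ℤ :=
  tw (primalAdj F) (intIn F Finset.univ A)

/-- The hypergraph given by `F` is (isomorphic to) the support hypergraph of `G`:
it has exactly one hyperedge `{v}` for each vertex `v` and exactly one hyperedge
`{u, v}` for each edge `uv`, and no other hyperedges. -/
def IsSupport (G : SimpleGraph V) (F : E → Finset V) : Prop :=
  (∀ e : E, (∃ v : V, F e = {v}) ∨ (∃ u v : V, G.Adj u v ∧ F e = {u, v})) ∧
  (∀ v : V, ∃! e : E, F e = {v}) ∧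
  (∀ u v : V, G.Adj u v → ∃! e : E, F e = ({u, v} : Finset V))

/-- `H` is a topological minor of `G` using only vertices in `s`. -/
def IsTopMinorOn {α β : Type} (H : SimpleGraph α) (G : SimpleGraph β) (s : Set β) : Prop :=
  ∃ φ : α → β, (∀ a, φ a ∈ s) ∧ Function.Injective φ ∧
    ∃ P : ∀ u v : α, H.Adj u v → G.Walk (φ u) (φ v),
      (∀ u v (h : H.Adj u v), (P u v h).IsPath) ∧
      (∀ u v (h : H.Adj u v), ∀ w ∈ (P u v h).support, w ∈ s) ∧
      (∀ u v (h : H.Adj u v) (w : β), w ∈ (P u v h).support → w ≠ φ u → w ≠ φ v →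
        ∀ a : α, φ a ≠ w) ∧
      (∀ u v u' v' (h : H.Adj u v) (h' : H.Adj u' v'),
        (s(u, v) : Sym2 α) ≠ s(u', v') →
        ∀ w : β, w ∈ (P u v h).support → w ∈ (P u' v' h').support → w = φ u ∨ w = φ v)

/-- `H` is a topological minor of `G`. -/
def IsTopMinor {α β : Type} (H : SimpleGraph α) (G : SimpleGraph β) : Prop :=
  IsTopMinorOn H G Set.univ

/-- A rooted superbranch decomposition of a hypergraph with hyperedge type `E`:
a finite rooted tree (given by a parent map) whose leaves are in bijection with `E`
and in which every non-leaf node has at least two children. -/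
structure SBD (E : Type) [Fintype E] where
  ι : Type
  fin : Fintype ι
  root : ι
  par : ι → ι
  par_root : par root = root
  reach : ∀ i : ι, ∃ n : ℕ, par^[n] i = root
  leafMap : E → ι
  inj : Function.Injective leafMap
  map_leaf : ∀ (e : E) (j : ι), par j = leafMap e → j = leafMap e
  leaf_surj : ∀ i : ι, (∀ j : ι, par j = i → j = i) → ∃ e : E, leafMap e = i
  branch : ∀ i : ι, (∃ j : ι, par j = i ∧ j ≠ i) → 2 ≤ {j : ι | par j = i ∧ j ≠ i}.ncard

/-- The set `L[t]` of hyperedges assigned to leaves below `t`. -/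
noncomputable def SBD.Lset [Fintype E] (T : SBD E) (t : T.ι) : Finset E :=
  Finset.univ.filter fun e => ∃ n : ℕ, T.par^[n] (T.leafMap e) = t

/-- The children of the root. -/
noncomputable def SBD.chd [Fintype E] (T : SBD E) : Finset T.ι :=
  letI := T.fin
  Finset.univ.filter fun j => T.par j = T.root ∧ j ≠ T.root

/-- The vertex sets of the hyperedges of the torso of the root:
the hyperedge corresponding to a child `t` has vertex set `bd(L[t])`. -/
noncomputable def SBD.Ft [Fintype E] (T : SBD E) (F : E → Finset V) : T.ι → Finset V :=
  fun t => bdIn F Finset.univ (T.Lset t)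

/-- Downwards well-linkedness of a superbranch decomposition. -/
def DownWL [Fintype E] (F : E → Finset V) (T : SBD E) : Prop :=
  ∀ t : T.ι, WellLinkedIn F Finset.univ (T.Lset t)

/-- The adhesion size of the superbranch decomposition is at most `α`. -/
def AdhLE [Fintype E] (F : E → Finset V) (T : SBD E) (α : ℕ) : Prop :=
  ∀ t : T.ι, t ≠ T.root → lamIn F Finset.univ (T.Lset t) ≤ α

/-- A rooted tree decomposition (given by a root and a tree decomposition). -/
structure RTreeDecompOn (Adj : V → V → Prop) (s : Finset V) extends TreeDecompOn Adj s where
  root : ι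

/-- A `(k, c)`-protrusion decomposition exists. -/
def HasProtrusionDecomp (Adj : V → V → Prop) (s : Finset V) (k : ℝ) (c : ℕ) : Prop :=
  ∃ D : RTreeDecompOn Adj s,
    ((D.bag D.root).card : ℝ) ≤ k ∧
    ((D.tr.neighborSet D.root).ncard : ℝ) ≤ k ∧
    ∀ i, i ≠ D.root → (D.bag i).card ≤ c

/-- A finite simple graph on the vertex universe `ℕ`. -/
structure FGraph where
  verts : Finset ℕ
  Adj : ℕ → ℕ → Prop
  symm : ∀ u v, Adj u v → Adj v u
  loopless : ∀ u, ¬ Adj u u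
  supp : ∀ u v, Adj u v → u ∈ verts ∧ v ∈ verts

/-- The `SimpleGraph` of an `FGraph`. -/
def FGraph.toSG (G : FGraph) : SimpleGraph ℕ where
  Adj := G.Adj
  symm := ⟨fun u v h => G.symm u v h⟩
  loopless := ⟨fun u h => G.loopless u h⟩

/-- A rooted tree decomposition, with the rooted tree given by a parent map and
connectivity phrased for rooted trees. -/
structure RootedTD (Adj : V → V → Prop) (s : Finset V) where
  ι : Type
  fin : Fintype ι
  root : ι
  par : ι → ι
  par_root : par root = root
  reach : ∀ i : ι, ∃ n : ℕ, par^[n] i = root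
  bag : ι → Finset V
  bag_sub : ∀ i, bag i ⊆ s
  cover_v : ∀ v ∈ s, ∃ i, v ∈ bag i
  cover_e : ∀ u ∈ s, ∀ v ∈ s, Adj u v → ∃ i, u ∈ bag i ∧ v ∈ bag i
  conn : ∀ v ∈ s, ∃ m : ι, v ∈ bag m ∧ ∀ i : ι, v ∈ bag i →
    ∃ n : ℕ, par^[n] i = m ∧ ∀ l ≤ n, v ∈ bag (par^[l] i)

lemma mem_Vs {F : E → Finset V} {A : Finset E} {x : V} :
    x ∈ Vs F A ↔ ∃ e ∈ A, x ∈ F e := Finset.mem_biUnion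

lemma Vs_mono (F : E → Finset V) {A B : Finset E} (h : A ⊆ B) : Vs F A ⊆ Vs F B :=
  Finset.biUnion_subset_biUnion_of_subset_left _ h

lemma bdIn_subset_Vs (F : E → Finset V) (ground A : Finset E) : bdIn F ground A ⊆ Vs F A :=
  Finset.inter_subset_left

lemma intIn_subset_Vs (F : E → Finset V) (ground A : Finset E) : intIn F ground A ⊆ Vs F A :=
  Finset.sdiff_subset

lemma disjoint_intIn_bdIn (F : E → Finset V) (ground A : Finset E) :
    Disjoint (intIn F ground A) (bdIn F ground A) :=
  disjoint_sdiff_self_left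

lemma disjoint_intIn_Vs (F : E → Finset V) {ground A A' : Finset E} (hA' : A' ⊆ ground)
    (hd : Disjoint A A') : Disjoint (intIn F ground A) (Vs F A') := by
  refine Finset.disjoint_left.mpr fun x hx hx' => ?_
  obtain ⟨hxA, hxbd⟩ := Finset.mem_sdiff.mp hx
  obtain ⟨e, he, hxe⟩ := mem_Vs.mp hx'
  exact hxbd (Finset.mem_inter.mpr ⟨hxA, mem_Vs.mpr
    ⟨e, Finset.mem_sdiff.mpr ⟨hA' he, Finset.disjoint_right.mp hd he⟩, hxe⟩⟩)

lemma bdIn_subset_bdIn_union (F : E → Finset V) (ground A₁ A₂ : Finset E) :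
    bdIn F ground A₁ ⊆ bdIn F ground (A₁ ∪ A₂) ∪ (Vs F A₁ ∩ Vs F A₂) := by
  intro w hw
  obtain ⟨hw₁, hw'⟩ := Finset.mem_inter.mp hw
  obtain ⟨e, he, hwe⟩ := mem_Vs.mp hw'
  obtain ⟨heg, he₁⟩ := Finset.mem_sdiff.mp he
  by_cases he₂ : e ∈ A₂
  · exact Finset.mem_union_right _ (Finset.mem_inter.mpr ⟨hw₁, mem_Vs.mpr ⟨e, he₂, hwe⟩⟩)
  · have he' : e ∈ ground \ (A₁ ∪ A₂) := by simp [heg, he₁, he₂]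
    exact Finset.mem_union_left _ (Finset.mem_inter.mpr
      ⟨Vs_mono F Finset.subset_union_left hw₁, mem_Vs.mpr ⟨e, he', hwe⟩⟩)

lemma lamIn_lt_of_separation (F : E → Finset V) (ground : Finset E) {A₁ A₂ : Finset E} {v : V}
    (hsep : Vs F A₁ ∩ Vs F A₂ ⊆ bdIn F ground (A₁ ∪ A₂))
    (hv : v ∈ bdIn F ground (A₁ ∪ A₂)) (hv₁ : v ∉ Vs F A₁) :
    lamIn F ground A₁ < lamIn F ground (A₁ ∪ A₂) := by
  have hsub : bdIn F ground A₁ ⊆ bdIn F ground (A₁ ∪ A₂) :=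
    (bdIn_subset_bdIn_union F ground A₁ A₂).trans (Finset.union_subset subset_rfl hsep)
  exact Finset.card_lt_card ((Finset.ssubset_iff_of_subset hsub).mpr
    ⟨v, hv, fun h => hv₁ (bdIn_subset_Vs F ground A₁ h)⟩)

def primalGraphOn (F : E → Finset V) (A : Finset E) (K : Set V) : SimpleGraph V where
  Adj x y := x ≠ y ∧ x ∈ K ∧ y ∈ K ∧ ∃ e ∈ A, x ∈ F e ∧ y ∈ F e
  symm := ⟨fun _ _ ⟨hne, hx, hy, e, he, hxe, hye⟩ => ⟨hne.symm, hy, hx, e, he, hye, hxe⟩⟩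
  loopless := ⟨fun _ h => h.1 rfl⟩

lemma primalGraphOn_le {G : SimpleGraph V} {F : E → Finset V}
    (hG : ∀ e, ∀ x ∈ F e, ∀ y ∈ F e, x ≠ y → G.Adj x y) (A : Finset E) (K : Set V) :
    primalGraphOn F A K ≤ G :=
  fun _ _ ⟨hne, _, _, e, _, hx, hy⟩ => hG e _ hx _ hy hne

lemma mem_of_mem_support_primalGraphOn {F : E → Finset V} {A : Finset E} {K : Set V}
    {a b : V} (p : (primalGraphOn F A K).Walk a b) (ha : a ∈ K) : ∀ w ∈ p.support, w ∈ K := by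
  induction p with
  | nil => simpa using ha
  | cons h _ ih => simpa [ha] using ih h.2.2.1

theorem WellLinkedIn.reachable {F : E → Finset V} {ground A : Finset E}
    (hA : WellLinkedIn F ground A) {u v : V}
    (hu : u ∈ bdIn F ground A) (hv : v ∈ bdIn F ground A) :
    (primalGraphOn F A (insert u (insert v ↑(intIn F ground A)))).Reachable u v := by
  set K : Set V := insert u (insert v ↑(intIn F ground A))
  by_contra hnr
  set C : Set V := {x | (primalGraphOn F A K).Reachable u x}
  have hCK : ∀ x ∈ C, x ∈ K := fun x ⟨p⟩ =>
    mem_of_mem_support_primalGraphOn p (Set.mem_insert u _) x p.end_mem_support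
  set A₁ := A.filter fun e => ∃ x ∈ F e, x ∈ C
  set A₂ := A.filter fun e => ¬ ∃ x ∈ F e, x ∈ C
  have hA₁₂ : A₁ ∪ A₂ = A := Finset.filter_union_filter_not_eq _ A
  have hA₂C : ∀ w ∈ Vs F A₂, w ∉ C := fun w hw hwC => by
    obtain ⟨e, he, hwe⟩ := mem_Vs.mp hw
    exact (Finset.mem_filter.mp he).2 ⟨w, hwe, hwC⟩
  have hA₁K : ∀ w ∈ Vs F A₁, w ∉ C → w ∉ K := fun w hw hwC hwK => by
    obtain ⟨e, he, hwe⟩ := mem_Vs.mp hw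
    obtain ⟨heA, x, hxe, hxC⟩ := Finset.mem_filter.mp he
    have hxw : x ≠ w := fun h => hwC (h ▸ hxC)
    exact hwC (hxC.trans (SimpleGraph.Adj.reachable ⟨hxw, hCK x hxC, hwK, e, heA, hxe, hwe⟩))
  have hsep : Vs F A₁ ∩ Vs F A₂ ⊆ bdIn F ground (A₁ ∪ A₂) := fun w hw => by
    obtain ⟨hw₁, hw₂⟩ := Finset.mem_inter.mp hw
    by_contra hbd
    refine hA₁K w hw₁ (hA₂C w hw₂) (Set.mem_insert_of_mem _ (Set.mem_insert_of_mem _ ?_))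
    rw [← hA₁₂]
    exact Finset.mem_sdiff.mpr ⟨Vs_mono F Finset.subset_union_left hw₁, hbd⟩
  have hv₁ : v ∉ Vs F A₁ := fun h =>
    hA₁K v h hnr (Set.mem_insert_of_mem _ (Set.mem_insert v _))
  have hu₂ : u ∉ Vs F A₂ := fun h => hA₂C u h (SimpleGraph.Reachable.refl u)
  have h₁ := lamIn_lt_of_separation F ground hsep (hA₁₂ ▸ hv) hv₁
  have h₂ := lamIn_lt_of_separation F ground (v := u)
    (by rwa [Finset.inter_comm, Finset.union_comm]) (by rwa [Finset.union_comm, hA₁₂]) hu₂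
  rw [hA₁₂] at h₁
  rw [Finset.union_comm, hA₁₂] at h₂
  rcases hA A₁ A₂ hA₁₂ (Finset.disjoint_iff_inter_eq_empty.mp
    (Finset.disjoint_filter_filter_not A A _)) with h | h <;> omega

theorem WellLinkedIn.exists_path_through_intIn {G : SimpleGraph V} {F : E → Finset V}
    (hG : ∀ e, ∀ x ∈ F e, ∀ y ∈ F e, x ≠ y → G.Adj x y) {ground A : Finset E}
    (hA : WellLinkedIn F ground A) {u v : V}
    (hu : u ∈ bdIn F ground A) (hv : v ∈ bdIn F ground A) :
    ∃ p : G.Walk u v, p.IsPath ∧ ∀ w ∈ p.support, w = u ∨ w = v ∨ w ∈ intIn F ground A := by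
  obtain ⟨p⟩ := hA.reachable hu hv
  refine ⟨p.bypass.mapLe (primalGraphOn_le hG _ _), p.bypass_isPath.mapLe _, fun w hw => ?_⟩
  rw [SimpleGraph.Walk.support_mapLe_eq_support] at hw
  simpa using mem_of_mem_support_primalGraphOn p.bypass (Set.mem_insert u _) w hw

theorem isTopMinor_of_wellLinked_family [Fintype E] {W : Type} (H : SimpleGraph W)
    (G : SimpleGraph V) (F : E → Finset V) (hG : ∀ e, ∀ x ∈ F e, ∀ y ∈ F e, x ≠ y → G.Adj x y)
    {B : Finset V} (φ : W ↪ V) (hφ : ∀ a, φ a ∈ B)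
    (A : H.edgeSet → Finset E) (hdisj : Pairwise fun e e' => Disjoint (A e) (A e'))
    (hwl : ∀ e, WellLinkedIn F Finset.univ (A e)) (hbd : ∀ e, bdIn F Finset.univ (A e) = B) :
    IsTopMinor H G := by
  have hpath : ∀ u v (h : H.Adj u v), ∃ p : G.Walk (φ u) (φ v), p.IsPath ∧
      ∀ w ∈ p.support, w = φ u ∨ w = φ v ∨ w ∈ intIn F Finset.univ (A ⟨s(u, v), h⟩) :=
    fun u v h => (hwl _).exists_path_through_intIn hG (hbd _ ▸ hφ u) (hbd _ ▸ hφ v)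
  choose P hPpath hPsupp using hpath
  have hφint : ∀ e a, φ a ∉ intIn F Finset.univ (A e) := fun e a h =>
    Finset.disjoint_left.mp (disjoint_intIn_bdIn F _ _) h (hbd e ▸ hφ a)
  have hBVs : ∀ e, B ⊆ Vs F (A e) := fun e => hbd e ▸ bdIn_subset_Vs F _ _
  refine ⟨φ, fun _ => trivial, φ.injective, P, hPpath, fun _ _ _ _ _ => trivial, ?_, ?_⟩
  · rintro u v h _ hw hwu hwv a rfl
    rcases hPsupp u v h _ hw with h' | h' | hint
    exacts [hwu h', hwv h', hφint _ a hint]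
  · intro u v u' v' h h' hne w hw hw'
    rcases hPsupp u v h w hw with h₁ | h₁ | hint
    · exact Or.inl h₁
    · exact Or.inr h₁
    exfalso
    have hdis : Disjoint (intIn F Finset.univ (A ⟨s(u, v), h⟩)) (Vs F (A ⟨s(u', v'), h'⟩)) :=
      disjoint_intIn_Vs F (Finset.subset_univ _) (hdisj fun heq => hne (Subtype.ext_iff.mp heq))
    refine Finset.disjoint_left.mp hdis hint ?_
    rcases hPsupp u' v' h' w hw' with rfl | rfl | hint'
    exacts [hBVs _ (hφ u'), hBVs _ (hφ v'), intIn_subset_Vs F _ _ hint']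

lemma IsSupport.adj_of_mem {G : SimpleGraph V} {F : E → Finset V} (hF : IsSupport G F) (e : E) :
    ∀ x ∈ F e, ∀ y ∈ F e, x ≠ y → G.Adj x y := by
  intro x hx y hy hxy
  rcases hF.1 e with ⟨a, ha⟩ | ⟨a, b, hab, ha⟩
  · rw [ha, Finset.mem_singleton] at hx hy
    exact absurd (hx.trans hy.symm) hxy
  · rw [ha, Finset.mem_insert, Finset.mem_singleton] at hx hy
    rcases hx with rfl | rfl <;> rcases hy with rfl | rfl
    exacts [absurd rfl hxy, hab, hab.symm, absurd rfl hxy]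

namespace SBD

variable [Fintype E] (T : SBD E)

lemma eq_of_iterate_par_eq {c c' x : T.ι} (hc : T.par c = T.root) (hc' : c' ≠ T.root)
    {n m : ℕ} (hnm : n ≤ m) (hn : T.par^[n] x = c) (hm : T.par^[m] x = c') : c = c' := by
  obtain ⟨k, rfl⟩ := Nat.exists_eq_add_of_le' hnm
  rw [Function.iterate_add_apply, hn] at hm
  cases k with
  | zero => exact hm
  | succ j =>
    rw [Function.iterate_succ_apply, hc, Function.iterate_fixed T.par_root] at hm
    exact absurd hm.symm hc'

lemma disjoint_Lset_of_mem_chd {c c' : T.ι} (hc : c ∈ T.chd) (hc' : c' ∈ T.chd) (hne : c ≠ c') :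
    Disjoint (T.Lset c) (T.Lset c') := by
  simp only [chd, Finset.mem_filter, Finset.mem_univ, true_and] at hc hc'
  refine Finset.disjoint_left.mpr fun e he he' => ?_
  simp only [Lset, Finset.mem_filter, Finset.mem_univ, true_and] at he he'
  obtain ⟨n, hn⟩ := he
  obtain ⟨m, hm⟩ := he'
  rcases le_total n m with h | h
  · exact hne (T.eq_of_iterate_par_eq hc.1 hc'.2 h hn hm)
  · exact hne (T.eq_of_iterate_par_eq hc'.1 hc.2 h hm hn).symm

end SBD

theorem statement7_general {W V E : Type} [Fintype W] [Fintype E]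
    (H : SimpleGraph W) (G : SimpleGraph V) (F : E → Finset V)
    (hF : IsSupport G F) (hfree : ¬ IsTopMinor H G)
    (T : SBD E) (hwl : DownWL F T)
    (s : T.ι) (hrank : Fintype.card W ≤ (T.Ft F s).card) :
    (T.chd.filter fun s' => T.Ft F s' = T.Ft F s).card <
      Fintype.card W * (Fintype.card W - 1) / 2 := by
  by_contra! hmany
  obtain ⟨φ⟩ : Nonempty (W ↪ T.Ft F s) :=
    Function.Embedding.nonempty_of_card_le (by rwa [Fintype.card_coe])
  obtain ⟨ψ⟩ : Nonempty ({p : Sym2 W // ¬ p.IsDiag} ↪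
      T.chd.filter fun s' => T.Ft F s' = T.Ft F s) :=
    Function.Embedding.nonempty_of_card_le
      (by rwa [Sym2.card_subtype_not_diag, Nat.choose_two_right, Fintype.card_coe])
  let c : H.edgeSet → T.ι := fun e => ψ ⟨e, H.not_isDiag_of_mem_edgeSet e.2⟩
  have hc : ∀ e, c e ∈ T.chd ∧ T.Ft F (c e) = T.Ft F s := fun e => Finset.mem_filter.mp (ψ _).2
  have hc_inj : c.Injective := fun e e' h => by
    simpa [Subtype.ext_iff] using ψ.injective (Subtype.ext h)
  refine hfree (isTopMinor_of_wellLinked_family H G F hF.adj_of_mem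
    (φ.trans (Function.Embedding.subtype _)) (fun a => (φ a).2) (fun e => T.Lset (c e))
    (fun e e' hne => T.disjoint_Lset_of_mem_chd (hc e).1 (hc e').1 (hc_inj.ne hne))
    (fun e => hwl _) (fun e => (hc e).2))

/-- hyperedges of the root torso of rank at least `|V(H)|` have
multiplicity less than `|V(H)| * (|V(H)| - 1) / 2`. -/
theorem statement7 {W V E : Type} [Fintype W] [Fintype V] [Fintype E]
    (H : SimpleGraph W) (G : SimpleGraph V) (F : E → Finset V)
    (hF : IsSupport G F) (hfree : ¬ IsTopMinor H G)
    (T : SBD E) (hwl : DownWL F T)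
    (s : T.ι) (hs : s ∈ T.chd) (hrank : Fintype.card W ≤ (T.Ft F s).card) :
    (T.chd.filter fun s' => T.Ft F s' = T.Ft F s).card <
      Fintype.card W * (Fintype.card W - 1) / 2 :=
  statement7_general H G F hF hfree T hwl s hrank

end Paper
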